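/- arXiv:2104.13191 — 4 statements merged into one kernel-verified Lean document; each statement's English description precedes it below -/
import Mathlib

section
/- Let E, E' be closure spaces, and suppose φ : E → E' and ψ : E' → E are continuous maps forming a Galois connection with respect to the specialization quasiorders (φ(x) ≤ x' ⟺ x ≤ ψ(x')). Then for all closed F ⊆ E and closed F' ⊆ E', φ⁻¹(F') ⊆ F if and only if F' ⊆ ψ⁻¹(F); i.e. (φ⁻¹, ψ⁻¹) is a Galois connection between the complete lattices of closed sets of E' and of E. -/
theorem galois_spec_to_closed_sets {E E' : Type*}
    (c : Set E → Set E) (c' : Set E' → Set E')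
    (hc : ∀ A B : Set E, A ⊆ B → A ⊆ c (c A) ∧ c (c A) ⊆ c B)
    (hc' : ∀ A B : Set E', A ⊆ B → A ⊆ c' (c' A) ∧ c' (c' A) ⊆ c' B)
    (φ : E → E') (ψ : E' → E)
    (hφ : ∀ F' : Set E', c' F' = F' → c (φ ⁻¹' F') = φ ⁻¹' F')
    (hψ : ∀ F : Set E, c F = F → c' (ψ ⁻¹' F) = ψ ⁻¹' F)
    (h : ∀ (x : E) (x' : E'), φ x ∈ c' {x'} ↔ x ∈ c {ψ x'}) :
    ∀ (F : Set E) (F' : Set E'), c F = F → c' F' = F' →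
      (φ ⁻¹' F' ⊆ F ↔ F' ⊆ ψ ⁻¹' F) := by
  -- extensivity
  have ext : ∀ A : Set E, A ⊆ c A := fun A =>
    (hc A A (le_refl A)).1.trans (hc A A (le_refl A)).2
  have ext' : ∀ A : Set E', A ⊆ c' A := fun A =>
    (hc' A A (le_refl A)).1.trans (hc' A A (le_refl A)).2
  -- monotonicity
  have mono : ∀ A B : Set E, A ⊆ B → c A ⊆ c B := fun A B hAB =>
    (ext (c A)).trans (hc A B hAB).2
  have mono' : ∀ A B : Set E', A ⊆ B → c' A ⊆ c' B := fun A B hAB =>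
    (ext' (c' A)).trans (hc' A B hAB).2
  intro F F' hF hF'
  constructor
  · intro hsub x' hx'
    have h1 : φ (ψ x') ∈ c' {x'} := (h (ψ x') x').mpr (ext {ψ x'} rfl)
    have h2 : c' {x'} ⊆ F' := by
      have := mono' {x'} F' (Set.singleton_subset_iff.mpr hx')
      rwa [hF'] at this
    exact hsub (h2 h1)
  · intro hsub x hx
    have h1 : x ∈ c {ψ (φ x)} := (h x (φ x)).mp (ext' {φ x} rfl)
    have h2 : c {ψ (φ x)} ⊆ F := by
      have := mono {ψ (φ x)} F (Set.singleton_subset_iff.mpr (hsub hx))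
      rwa [hF] at this
    exact h2 h1
end

section
/- Let E, E' be closure spaces and φ : E → E', ψ : E' → E continuous maps such that for all closed F ⊆ E and closed F' ⊆ E', φ⁻¹(F') ⊆ F if and only if F' ⊆ ψ⁻¹(F). Then φ⁻¹([A']) = [ψ(A')] for every subset A' of E', i.e. (φ, ψ) is a Galois connection between the closure spaces E and E'. -/
theorem galois_closed_sets_to_closure {E E' : Type*}
    (c : Set E → Set E) (c' : Set E' → Set E')
    (hc : ∀ A B : Set E, A ⊆ B → A ⊆ c (c A) ∧ c (c A) ⊆ c B)
    (hc' : ∀ A B : Set E', A ⊆ B → A ⊆ c' (c' A) ∧ c' (c' A) ⊆ c' B)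
    (φ : E → E') (ψ : E' → E)
    (hφ : ∀ F' : Set E', c' F' = F' → c (φ ⁻¹' F') = φ ⁻¹' F')
    (hψ : ∀ F : Set E, c F = F → c' (ψ ⁻¹' F) = ψ ⁻¹' F)
    (h : ∀ (F : Set E) (F' : Set E'), c F = F → c' F' = F' →
      (φ ⁻¹' F' ⊆ F ↔ F' ⊆ ψ ⁻¹' F)) :
    ∀ A' : Set E', φ ⁻¹' (c' A') = c (ψ '' A') := by
  -- basic closure facts
  have ext : ∀ A : Set E, A ⊆ c A := fun A =>
    (hc A A subset_rfl).1.trans (hc A A subset_rfl).2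
  have ext' : ∀ A : Set E', A ⊆ c' A := fun A =>
    (hc' A A subset_rfl).1.trans (hc' A A subset_rfl).2
  have mono : ∀ A B : Set E, A ⊆ B → c A ⊆ c B := fun A B hAB =>
    (ext (c A)).trans (hc A B hAB).2
  have mono' : ∀ A B : Set E', A ⊆ B → c' A ⊆ c' B := fun A B hAB =>
    (ext' (c' A)).trans (hc' A B hAB).2
  have idem : ∀ A : Set E, c (c A) = c A := fun A =>
    le_antisymm (hc A A subset_rfl).2 (ext (c A))
  have idem' : ∀ A : Set E', c' (c' A) = c' A := fun A =>
    le_antisymm (hc' A A subset_rfl).2 (ext' (c' A))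
  intro A'
  have hF'closed : c' (c' A') = c' A' := idem' A'
  set F : Set E := c (ψ '' A') with hF
  have hFclosed : c F = F := idem (ψ '' A')
  apply le_antisymm
  · -- φ⁻¹(c' A') ⊆ F
    have hA'sub : A' ⊆ ψ ⁻¹' F := fun x hx =>
      ext (ψ '' A') ⟨x, hx, rfl⟩
    have hcA'sub : c' A' ⊆ ψ ⁻¹' F := by
      have := mono' A' (ψ ⁻¹' F) hA'sub
      rwa [hψ F hFclosed] at this
    exact (h F (c' A') hFclosed hF'closed).mpr hcA'sub
  · -- F ⊆ φ⁻¹(c' A')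
    have hclosedpre : c (φ ⁻¹' (c' A')) = φ ⁻¹' (c' A') := hφ _ hF'closed
    have hsub : c' A' ⊆ ψ ⁻¹' (φ ⁻¹' (c' A')) :=
      (h (φ ⁻¹' (c' A')) (c' A') hclosedpre hF'closed).mp subset_rfl
    have him : ψ '' A' ⊆ φ ⁻¹' (c' A') := by
      rintro _ ⟨y, hy, rfl⟩
      exact hsub (ext' A' hy)
    have := mono (ψ '' A') (φ ⁻¹' (c' A')) him
    rwa [hclosedpre] at this
end

section
/- Let E, E' be closure spaces and φ : E → E', ψ : E' → E maps. The following are equivalent: (1) φ⁻¹([A']) = [ψ(A')] for all A' ⊆ E'; (2) φ and ψ are continuous and (φ, ψ) is a Galois connection between the specialization quasiorders of E and E'; (3) φ and ψ are continuous and (φ⁻¹, ψ⁻¹) is a Galois connection between the lattices of closed sets of E' and E (ordered by inclusion). -/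
theorem galois_closure_characterization {E E' : Type*}
    (c : Set E → Set E) (c' : Set E' → Set E')
    (hc : ∀ A B : Set E, A ⊆ B → A ⊆ c (c A) ∧ c (c A) ⊆ c B)
    (hc' : ∀ A B : Set E', A ⊆ B → A ⊆ c' (c' A) ∧ c' (c' A) ⊆ c' B)
    (φ : E → E') (ψ : E' → E) :
    ((∀ A' : Set E', φ ⁻¹' (c' A') = c (ψ '' A')) ↔
      ((∀ F' : Set E', c' F' = F' → c (φ ⁻¹' F') = φ ⁻¹' F') ∧
       (∀ F : Set E, c F = F → c' (ψ ⁻¹' F) = ψ ⁻¹' F) ∧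
       (∀ (x : E) (x' : E'), φ x ∈ c' {x'} ↔ x ∈ c {ψ x'}))) ∧
    ((∀ A' : Set E', φ ⁻¹' (c' A') = c (ψ '' A')) ↔
      ((∀ F' : Set E', c' F' = F' → c (φ ⁻¹' F') = φ ⁻¹' F') ∧
       (∀ F : Set E, c F = F → c' (ψ ⁻¹' F) = ψ ⁻¹' F) ∧
       (∀ (F : Set E) (F' : Set E'), c F = F → c' F' = F' →
         (φ ⁻¹' F' ⊆ F ↔ F' ⊆ ψ ⁻¹' F)))) := by
  -- basic closure facts
  have ext : ∀ A : Set E, A ⊆ c A := fun A =>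
    (hc A A subset_rfl).1.trans (hc A A subset_rfl).2
  have ext' : ∀ A : Set E', A ⊆ c' A := fun A =>
    (hc' A A subset_rfl).1.trans (hc' A A subset_rfl).2
  have mono : ∀ {A B : Set E}, A ⊆ B → c A ⊆ c B := fun {A B} h =>
    (ext (c A)).trans (hc A B h).2
  have mono' : ∀ {A B : Set E'}, A ⊆ B → c' A ⊆ c' B := fun {A B} h =>
    (ext' (c' A)).trans (hc' A B h).2
  have idem : ∀ A : Set E, c (c A) = c A := fun A =>
    Set.Subset.antisymm (hc A A subset_rfl).2 (ext (c A))
  have idem' : ∀ A : Set E', c' (c' A) = c' A := fun A =>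
    Set.Subset.antisymm (hc' A A subset_rfl).2 (ext' (c' A))
  -- continuity of φ from (1)
  have contφ : (∀ A' : Set E', φ ⁻¹' (c' A') = c (ψ '' A')) →
      ∀ F' : Set E', c' F' = F' → c (φ ⁻¹' F') = φ ⁻¹' F' := by
    intro h1 F' hF'
    have h2 := h1 F'
    rw [hF'] at h2
    rw [h2, idem]
  -- φ ∘ ψ is dominated by identity, from (1)
  have key1 : (∀ A' : Set E', φ ⁻¹' (c' A') = c (ψ '' A')) →
      ∀ x' : E', φ (ψ x') ∈ c' {x'} := by
    intro h1 x'
    have h2 := h1 {x'}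
    rw [Set.image_singleton] at h2
    have h3 : ψ x' ∈ c {ψ x'} := ext {ψ x'} rfl
    rw [← h2] at h3
    exact h3
  -- continuity of ψ from (1)
  have contψ : (∀ A' : Set E', φ ⁻¹' (c' A') = c (ψ '' A')) →
      ∀ F : Set E, c F = F → c' (ψ ⁻¹' F) = ψ ⁻¹' F := by
    intro h1 F hF
    refine Set.Subset.antisymm ?_ (ext' _)
    intro x' hx'
    have h2 : φ (ψ x') ∈ c' (ψ ⁻¹' F) := by
      have h3 : c' {x'} ⊆ c' (ψ ⁻¹' F) := by
        have := mono' (Set.singleton_subset_iff.mpr hx')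
        rwa [idem'] at this
      exact h3 (key1 h1 x')
    have h4 : ψ x' ∈ c (ψ '' (ψ ⁻¹' F)) := by rw [← h1]; exact h2
    have h5 : c (ψ '' (ψ ⁻¹' F)) ⊆ F := by
      have := mono (Set.image_preimage_subset ψ F)
      rwa [hF] at this
    exact h5 h4
  constructor
  · -- first equivalence
    constructor
    · intro h1
      refine ⟨contφ h1, contψ h1, ?_⟩
      intro x x'
      have h2 := h1 {x'}
      rw [Set.image_singleton] at h2
      rw [← h2]; exact Iff.rfl
    · rintro ⟨hφ, hψ, hg⟩ A'
      refine Set.Subset.antisymm ?_ ?_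
      · intro x hx
        have hclosed : c' (ψ ⁻¹' (c (ψ '' A'))) = ψ ⁻¹' (c (ψ '' A')) := hψ _ (idem _)
        have hsub : A' ⊆ ψ ⁻¹' (c (ψ '' A')) := fun a' ha' =>
          ext _ (Set.mem_image_of_mem ψ ha')
        have h2 : c' A' ⊆ ψ ⁻¹' (c (ψ '' A')) := by
          rw [← hclosed]; exact mono' hsub
        have h3 : ψ (φ x) ∈ c (ψ '' A') := h2 hx
        have h4 : x ∈ c {ψ (φ x)} := (hg x (φ x)).1 (ext' {φ x} rfl)
        have h5 : c {ψ (φ x)} ⊆ c (ψ '' A') := by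
          have := mono (Set.singleton_subset_iff.mpr h3)
          rwa [idem] at this
        exact h5 h4
      · have hclosed : c (φ ⁻¹' (c' A')) = φ ⁻¹' (c' A') := hφ _ (idem' _)
        have hsub : ψ '' A' ⊆ φ ⁻¹' (c' A') := by
          rintro _ ⟨a', ha', rfl⟩
          have h2 : ψ a' ∈ c {ψ a'} := ext _ rfl
          have h3 : φ (ψ a') ∈ c' {a'} := (hg (ψ a') a').2 h2
          exact mono' (Set.singleton_subset_iff.mpr ha') h3
        have := mono hsub
        rwa [hclosed] at this
  · -- second equivalence
    constructor
    · intro h1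
      refine ⟨contφ h1, contψ h1, ?_⟩
      intro F F' hF hF'
      constructor
      · intro h2 x' hx'
        have h3 : φ (ψ x') ∈ F' := by
          have h4 : c' {x'} ⊆ F' := by
            have := mono' (Set.singleton_subset_iff.mpr hx')
            rwa [hF'] at this
          exact h4 (key1 h1 x')
        exact h2 h3
      · intro h2 x hx
        have h3 : x ∈ φ ⁻¹' (c' F') := ext' F' hx
        rw [h1 F'] at h3
        have h4 : c (ψ '' F') ⊆ F := by
          have := mono (Set.image_subset_iff.mpr h2)
          rwa [hF] at this
        exact h4 h3
    · rintro ⟨hφ, hψ, hgs⟩ A'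
      have key : ∀ x' : E', φ (ψ x') ∈ c' {x'} := by
        intro x'
        have hF : c (φ ⁻¹' (c' {x'})) = φ ⁻¹' (c' {x'}) := hφ _ (idem' _)
        have h2 := (hgs (φ ⁻¹' (c' {x'})) (c' {x'}) hF (idem' _)).1 subset_rfl
        exact h2 (ext' {x'} rfl)
      refine Set.Subset.antisymm ?_ ?_
      · have hFc : c (c (ψ '' A')) = c (ψ '' A') := idem _
        have h2 := (hgs (c (ψ '' A')) (c' A') hFc (idem' _)).2
        apply h2
        have hclosed : c' (ψ ⁻¹' (c (ψ '' A'))) = ψ ⁻¹' (c (ψ '' A')) := hψ _ (idem _)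
        have hsub : A' ⊆ ψ ⁻¹' (c (ψ '' A')) := fun a' ha' =>
          ext _ (Set.mem_image_of_mem ψ ha')
        rw [← hclosed]
        exact mono' hsub
      · have hclosed : c (φ ⁻¹' (c' A')) = φ ⁻¹' (c' A') := hφ _ (idem' _)
        have hsub : ψ '' A' ⊆ φ ⁻¹' (c' A') := by
          rintro _ ⟨a', ha', rfl⟩
          exact mono' (Set.singleton_subset_iff.mpr ha') (key a')
        have := mono hsub
        rwa [hclosed] at this
end

section
/- If E and E' are T1 topological spaces (with their topological closure operators) and (φ, ψ) satisfies φ⁻¹(cl(A')) = cl(ψ(A')) for all A' ⊆ E', then φ and ψ are continuous bijections inverse to each other (homeomorphisms). -/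
theorem galois_t1_homeomorphism {E E' : Type*}
    [TopologicalSpace E] [TopologicalSpace E'] [T1Space E] [T1Space E']
    (φ : E → E') (ψ : E' → E)
    (h : ∀ A' : Set E', φ ⁻¹' closure A' = closure (ψ '' A')) :
    Continuous φ ∧ Continuous ψ ∧
    Function.LeftInverse ψ φ ∧ Function.RightInverse ψ φ := by
  have key : ∀ a' : E', φ ⁻¹' {a'} = {ψ a'} := by
    intro a'
    have := h {a'}
    rwa [closure_singleton, Set.image_singleton, closure_singleton] at this
  have hri : Function.RightInverse ψ φ := by
    intro a'
    have : ψ a' ∈ φ ⁻¹' {a'} := by rw [key]; rfl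
    simpa using this
  have hli : Function.LeftInverse ψ φ := by
    intro x
    have : x ∈ φ ⁻¹' {φ x} := rfl
    rw [key] at this
    exact this.symm
  have hpre : ∀ S : Set E', φ ⁻¹' S = ψ '' S := by
    intro S
    ext x
    constructor
    · intro hx; exact ⟨φ x, hx, hli x⟩
    · rintro ⟨a', ha', rfl⟩; simpa [hri a'] using ha'
  have hcontφ : Continuous φ := by
    rw [continuous_iff_isClosed]
    intro C hC
    have := h C
    rw [hC.closure_eq] at this
    rw [this]; exact isClosed_closure
  have hcontψ : Continuous ψ := by
    rw [continuous_iff_isClosed]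
    intro C hC
    have himg : ψ ⁻¹' C = φ '' C := by
      ext a'
      constructor
      · intro ha'; exact ⟨ψ a', ha', hri a'⟩
      · rintro ⟨x, hx, rfl⟩; simpa [hli x] using hx
    rw [himg]
    have hψφC : ψ '' (φ '' C) = C := by
      rw [← Set.image_comp]
      simp only [show ψ ∘ φ = id from funext hli, Set.image_id]
    have h2 : ψ '' closure (φ '' C) = ψ '' (φ '' C) := by
      rw [← hpre, h (φ '' C), hψφC, hC.closure_eq]
    have := hri.injective.image_injective h2
    rw [← this]
    exact isClosed_closure
  exact ⟨hcontφ, hcontψ, hli, hri⟩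
end
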